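/- arXiv:1808.05758 — 3 statements merged into one kernel-verified Lean document; each statement's English description precedes it below -/
import Mathlib

section
/- Let (X, μ) be a finite measure space and let G_1, ..., G_n ⊆ (-ε, ε) be measurable sets (indexed by a finite set of size n) with |G_i| > (3/2)ε for each i. Define Φ* = {γ ∈ (-ε,ε) : #{i : γ ∈ G_i} > n/4}. Then the Lebesgue measure of Φ* is greater than ε. -/
open MeasureTheory Set Classical

/-- averaging lemma. If `G_1, …, G_n ⊆ (-ε, ε)` are measurable sets
each of Lebesgue measure `> (3/2)ε`, then the set of `γ ∈ (-ε,ε)` belonging to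
more than `n/4` of them has Lebesgue measure `> ε`. -/
theorem stmt_5 (ε : ℝ) (hε : 0 < ε) (n : ℕ) (hn : 1 ≤ n)
    (G : Fin n → Set ℝ) (hGmeas : ∀ i, MeasurableSet (G i))
    (hGsub : ∀ i, G i ⊆ Set.Ioo (-ε) ε)
    (hGbig : ∀ i, (3 / 2 : ℝ) * ε < (volume (G i)).toReal) :
    ε < (volume {γ ∈ Set.Ioo (-ε) ε |
        (n : ℝ) / 4 < ((Finset.univ.filter fun i => γ ∈ G i).card : ℝ)}).toReal := by
  classical
  set c : ℝ → ℕ := fun γ => (Finset.univ.filter fun i => γ ∈ G i).card with hc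
  have hcm : Measurable c := by
    have hceq : c = fun γ => ∑ i : Fin n, if γ ∈ G i then 1 else 0 := by
      funext γ; exact Finset.card_filter _ _
    rw [hceq]
    exact Finset.measurable_sum _ fun i _ =>
      Measurable.ite (hGmeas i) measurable_const measurable_const
  set S : Set ℝ := {γ ∈ Set.Ioo (-ε) ε | (n : ℝ) / 4 < (c γ : ℝ)} with hS
  have hSmeas : MeasurableSet S := by
    have : S = Set.Ioo (-ε) ε ∩ c ⁻¹' {k | (n : ℝ) / 4 < (k : ℝ)} := by
      ext γ; simp [hS]
    rw [this]
    exact measurableSet_Ioo.inter (hcm (by trivial))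
  have hSsub : S ⊆ Set.Ioo (-ε) ε := fun γ hγ => hγ.1
  -- pointwise count bounds
  have hcle : ∀ γ, c γ ≤ n := fun γ => by
    simpa using Finset.card_filter_le Finset.univ (fun i => γ ∈ G i)
  have hczero : ∀ γ, γ ∉ Set.Ioo (-ε) ε → c γ = 0 := by
    intro γ hγ
    simp only [hc, Finset.card_eq_zero, Finset.filter_eq_empty_iff, Finset.mem_univ]
    exact fun i _ hi => hγ (hGsub i hi)
  -- the integral identity
  have hfmeas : ∀ i : Fin n, Measurable ((G i).indicator (fun _ => (1 : ENNReal))) :=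
    fun i => measurable_const.indicator (hGmeas i)
  have hceq2 : ∀ γ, (c γ : ENNReal) = ∑ i : Fin n, (G i).indicator (fun _ => (1 : ENNReal)) γ := by
    intro γ
    rw [show c γ = (Finset.univ.filter fun i => γ ∈ G i).card from rfl, Finset.card_filter]
    push_cast
    refine Finset.sum_congr rfl fun i _ => ?_
    simp [Set.indicator_apply]
  have hint : ∫⁻ γ, (c γ : ENNReal) = ∑ i : Fin n, volume (G i) := by
    calc ∫⁻ γ, (c γ : ENNReal)
        = ∫⁻ γ, ∑ i : Fin n, (G i).indicator (fun _ => (1 : ENNReal)) γ := by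
          simp_rw [hceq2]
      _ = ∑ i : Fin n, ∫⁻ γ, (G i).indicator (fun _ => (1 : ENNReal)) γ :=
          lintegral_finset_sum _ (fun i _ => hfmeas i)
      _ = ∑ i : Fin n, volume (G i) := by
          refine Finset.sum_congr rfl fun i _ => ?_
          simp [lintegral_indicator, hGmeas i]
  -- pointwise bound for 4 * count
  set D : Set ℝ := Set.Ioo (-ε) ε \ S with hD
  have hDmeas : MeasurableSet D := measurableSet_Ioo.diff hSmeas
  have hpt : ∀ γ, (4 : ENNReal) * (c γ : ENNReal) ≤
      S.indicator (fun _ => (4 * n : ENNReal)) γ + D.indicator (fun _ => (n : ENNReal)) γ := by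
    intro γ
    by_cases hγS : γ ∈ S
    · have : (c γ : ENNReal) ≤ n := by exact_mod_cast hcle γ
      have h4 : (4 : ENNReal) * (c γ : ENNReal) ≤ 4 * n := by
        exact mul_le_mul_right this 4
      calc (4 : ENNReal) * (c γ : ENNReal) ≤ 4 * n := h4
        _ ≤ _ := by simp [Set.indicator_apply, hγS]
    · by_cases hγI : γ ∈ Set.Ioo (-ε) ε
      · have hγD : γ ∈ D := ⟨hγI, hγS⟩
        have hnotc : ¬ ((n : ℝ) / 4 < (c γ : ℝ)) := by
          intro h; exact hγS ⟨hγI, h⟩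
        push_neg at hnotc
        have h4c : 4 * c γ ≤ n := by
          have : ((4 * c γ : ℕ) : ℝ) ≤ n := by push_cast; linarith
          exact_mod_cast this
        have : (4 : ENNReal) * (c γ : ENNReal) ≤ (n : ENNReal) := by
          have := (Nat.cast_le (α := ENNReal)).2 h4c
          push_cast at this
          exact this
        calc (4 : ENNReal) * (c γ : ENNReal) ≤ (n : ENNReal) := this
          _ ≤ _ := by simp [Set.indicator_apply, hγD, hγS]
      · simp [hczero γ hγI]
  -- integrate the bound
  have hbound : (4 : ENNReal) * ∑ i : Fin n, volume (G i) ≤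
      4 * n * volume S + n * volume D := by
    calc (4 : ENNReal) * ∑ i : Fin n, volume (G i)
        = ∫⁻ γ, 4 * (c γ : ENNReal) := by
          rw [lintegral_const_mul 4 (show Measurable fun γ => ((c γ : ℕ) : ENNReal) from measurable_from_nat.comp hcm), hint]
      _ ≤ ∫⁻ γ, (S.indicator (fun _ => (4 * n : ENNReal)) γ + D.indicator (fun _ => (n : ENNReal)) γ) :=
          lintegral_mono hpt
      _ = 4 * n * volume S + n * volume D := by
          rw [lintegral_add_left (measurable_const.indicator hSmeas),
            lintegral_indicator_const hSmeas, lintegral_indicator_const hDmeas]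
  -- finiteness
  have hIoo : volume (Set.Ioo (-ε) ε) = ENNReal.ofReal (2 * ε) := by
    rw [Real.volume_Ioo]; ring_nf
  have hIfin : volume (Set.Ioo (-ε) ε) ≠ ⊤ := by rw [hIoo]; exact ENNReal.ofReal_ne_top
  have hSfin : volume S ≠ ⊤ := fun h =>
    hIfin (top_le_iff.mp (h ▸ measure_mono hSsub))
  have hDfin : volume D ≠ ⊤ := fun h =>
    hIfin (top_le_iff.mp (h ▸ measure_mono (Set.diff_subset)))
  have hGfin : ∀ i, volume (G i) ≠ ⊤ := fun i h =>
    hIfin (top_le_iff.mp (h ▸ measure_mono (hGsub i)))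
  -- decompose the interval
  have hsplit : volume S + volume D = volume (Set.Ioo (-ε) ε) := by
    rw [hD, measure_add_diff hSmeas.nullMeasurableSet]
    congr 1
    exact Set.union_eq_self_of_subset_left hSsub
  set a := (volume S).toReal with ha
  set b := (volume D).toReal with hb
  have hab : a + b = 2 * ε := by
    have := congrArg ENNReal.toReal hsplit
    rw [ENNReal.toReal_add hSfin hDfin, hIoo, ENNReal.toReal_ofReal (by positivity)] at this
    exact this
  have ha0 : 0 ≤ a := ENNReal.toReal_nonneg
  have hb0 : 0 ≤ b := ENNReal.toReal_nonneg
  -- real-valued inequality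
  have hsumR : (∑ i : Fin n, volume (G i)).toReal = ∑ i : Fin n, (volume (G i)).toReal :=
    ENNReal.toReal_sum fun i _ => hGfin i
  have hsumfin : (∑ i : Fin n, volume (G i)) ≠ ⊤ := by
    rw [← lt_top_iff_ne_top]
    exact ENNReal.sum_lt_top.2 fun i _ => lt_top_iff_ne_top.mpr (hGfin i)
  have hRbound : 4 * ∑ i : Fin n, (volume (G i)).toReal ≤ 4 * n * a + n * b := by
    have h1 : ((4 : ENNReal) * ∑ i : Fin n, volume (G i)).toReal ≤
        ((4 : ENNReal) * n * volume S + n * volume D).toReal := by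
      apply ENNReal.toReal_mono _ hbound
      refine ENNReal.add_ne_top.mpr ⟨?_, ?_⟩
      · exact ENNReal.mul_ne_top (ENNReal.mul_ne_top (by simp) (by simp)) hSfin
      · exact ENNReal.mul_ne_top (by simp) hDfin
    rw [ENNReal.toReal_mul, ENNReal.toReal_add
        (ENNReal.mul_ne_top (ENNReal.mul_ne_top (by simp) (by simp)) hSfin)
        (ENNReal.mul_ne_top (by simp) hDfin),
      ENNReal.toReal_mul, ENNReal.toReal_mul, ENNReal.toReal_mul, hsumR] at h1
    simpa using h1
  have hsumbig : (n : ℝ) * ((3 / 2 : ℝ) * ε) < ∑ i : Fin n, (volume (G i)).toReal := by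
    have hne : (Finset.univ : Finset (Fin n)).Nonempty := by
      rw [Finset.univ_nonempty_iff]
      exact Fin.pos_iff_nonempty.mp hn
    have := Finset.sum_lt_sum_of_nonempty hne
      (f := fun _ => (3 / 2 : ℝ) * ε) (g := fun i => (volume (G i)).toReal)
      (fun i _ => hGbig i)
    simpa [Finset.sum_const, nsmul_eq_mul, Finset.card_univ, mul_comm] using this
  have hn1 : (1 : ℝ) ≤ n := by exact_mod_cast hn
  have haε : ε < a := by nlinarith
  exact haε
end

section
/- Let B be a finite index set and for each b ∈ B let J(b) ⊆ ℝ be an interval with |J(b)| ≥ δ > 0. Call b ∈ B 'good' if at most N of the intervals J(b̃) (b̃ ∈ B) have center within distance δ of the center of J(b). If at least half of the elements of B are good and N ≥ 1, then the measure of ⋃_{b ∈ B} J(b) is at least (|B|/2)·(δ/N). -/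
/-!
Shrink each interval to the closed δ/2-ball around its centre. Two such balls meet only when their
centres are within δ, so the balls of the good indices cover every point at most `N` times.
Integrating the counting function over the union gives `#good · δ ≤ N · |⋃ J(b)|`.
-/

open MeasureTheory Set Metric Classical

open scoped ENNReal

theorem sum_measure_le_mul_measure_biUnion {α ι : Type*} [MeasurableSpace α] (μ : Measure α)
    (s : Finset ι) {K : ι → Set α} {N : ℕ} (hK : ∀ b ∈ s, MeasurableSet (K b))
    (hmult : ∀ x, (s.filter fun b => x ∈ K b).card ≤ N) :
    ∑ b ∈ s, μ (K b) ≤ N * μ (⋃ b ∈ s, K b) := by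
  set U := ⋃ b ∈ s, K b
  have hcount : ∀ x, ∑ b ∈ s, (K b).indicator 1 x ≤ (N : ℝ≥0∞) := fun x => by
    simp only [indicator_apply, Pi.one_apply]
    rw [Finset.sum_boole]
    exact_mod_cast hmult x
  calc ∑ b ∈ s, μ (K b)
      = ∑ b ∈ s, ∫⁻ x in U, (K b).indicator 1 x ∂μ := Finset.sum_congr rfl fun b hb => by
        rw [lintegral_indicator_one (hK b hb), Measure.restrict_apply (hK b hb),
          inter_eq_left.2 (Finset.subset_set_biUnion_of_mem hb)]
    _ = ∫⁻ x in U, ∑ b ∈ s, (K b).indicator 1 x ∂μ :=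
        (lintegral_finsetSum s fun b hb => measurable_one.indicator (hK b hb)).symm
    _ ≤ ∫⁻ _ in U, (N : ℝ≥0∞) ∂μ := lintegral_mono hcount
    _ = N * μ U := setLIntegral_const U _

theorem card_filter_mem_closedBall_le {α ι : Type*} [PseudoMetricSpace α] [Fintype ι]
    (c : ι → α) (δ : ℝ) {N : ℕ} (s : Finset ι)
    (hs : ∀ b ∈ s, (Finset.univ.filter fun b' => dist (c b') (c b) ≤ δ).card ≤ N) (x : α) :
    (s.filter fun b => x ∈ closedBall (c b) (δ / 2)).card ≤ N := by
  rcases (s.filter fun b => x ∈ closedBall (c b) (δ / 2)).eq_empty_or_nonempty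
    with hempty | ⟨b₀, hb₀⟩
  · rw [hempty, Finset.card_empty]
    exact Nat.zero_le N
  rw [Finset.mem_filter, mem_closedBall] at hb₀
  refine (Finset.card_le_card fun b hb => ?_).trans (hs b₀ hb₀.1)
  rw [Finset.mem_filter, mem_closedBall'] at hb
  rw [Finset.mem_filter]
  exact ⟨Finset.mem_univ b, (dist_triangle _ x _).trans (by linarith [hb.2, hb₀.2])⟩

theorem stmt_8_general {ι : Type*} [Fintype ι] (δ : ℝ) (hδ : 0 < δ) (N : ℕ)
    (lo hi : ι → ℝ) (hlen : ∀ b, δ ≤ hi b - lo b)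
    (good : ι → Prop)
    (hgood : ∀ b, good b ↔
      ((Finset.univ.filter fun b' : ι =>
        |((lo b' + hi b') / 2) - ((lo b + hi b) / 2)| ≤ δ).card : ℕ) ≤ N)
    (hhalf : (Fintype.card ι : ℝ) ≤ 2 * ((Finset.univ.filter fun b => good b).card : ℝ)) :
    (Fintype.card ι : ℝ) / 2 * (δ / N) ≤
      (volume (⋃ b : ι, Set.Icc (lo b) (hi b))).toReal := by
  set c : ι → ℝ := fun b => (lo b + hi b) / 2
  set G := Finset.univ.filter fun b => good b
  set U := ⋃ b : ι, Icc (lo b) (hi b)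
  have hball : ∀ b, closedBall (c b) (δ / 2) ⊆ Icc (lo b) (hi b) := fun b => by
    rw [Real.closedBall_eq_Icc]
    dsimp only [c]
    exact Icc_subset_Icc (by linarith [hlen b]) (by linarith [hlen b])
  have hmult := card_filter_mem_closedBall_le c δ G fun b hb => by
    simpa only [Real.dist_eq] using (hgood b).1 (Finset.mem_filter.1 hb).2
  have hmeasure : G.card * ENNReal.ofReal δ ≤ N * volume U :=
    calc G.card * ENNReal.ofReal δ = ∑ b ∈ G, volume (closedBall (c b) (δ / 2)) := by
          simp [Real.volume_closedBall, mul_div_cancel₀]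
      _ ≤ N * volume (⋃ b ∈ G, closedBall (c b) (δ / 2)) :=
          sum_measure_le_mul_measure_biUnion volume G (fun _ _ => measurableSet_closedBall) hmult
      _ ≤ N * volume U := by
          gcongr
          exact iUnion₂_subset fun b _ =>
            (hball b).trans (subset_iUnion (fun b => Icc (lo b) (hi b)) b)
  have hU : volume U ≠ ⊤ := (isCompact_iUnion fun b => isCompact_Icc).measure_lt_top.ne
  have hreal : G.card * δ ≤ N * (volume U).toReal := by
    simpa [ENNReal.toReal_ofReal hδ.le] using
      ENNReal.toReal_mono (ENNReal.mul_ne_top (by simp) hU) hmeasure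
  rw [← mul_div_assoc]
  exact div_le_of_le_mul₀ (Nat.cast_nonneg N) ENNReal.toReal_nonneg (by nlinarith)

/-- good intervals force a large union. `b` is good if at most `N`
of the intervals have center within distance `δ` of the center of `J(b)`. If at
least half of the indices are good, the union has measure at least
`(|B|/2)·(δ/N)`. -/
theorem stmt_8 {ι : Type*} [Fintype ι] (δ : ℝ) (hδ : 0 < δ) (N : ℕ) (hN : 1 ≤ N)
    (lo hi : ι → ℝ) (hlen : ∀ b, δ ≤ hi b - lo b)
    (good : ι → Prop)
    (hgood : ∀ b, good b ↔
      ((Finset.univ.filter fun b' : ι =>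
        |((lo b' + hi b') / 2) - ((lo b + hi b) / 2)| ≤ δ).card : ℕ) ≤ N)
    (hhalf : (Fintype.card ι : ℝ) ≤ 2 * ((Finset.univ.filter fun b => good b).card : ℝ)) :
    (Fintype.card ι : ℝ) / 2 * (δ / N) ≤
      (volume (⋃ b : ι, Set.Icc (lo b) (hi b))).toReal :=
  stmt_8_general δ hδ N lo hi hlen good hgood hhalf
end

section
/- Suppose (r_i, t_i), i ≥ 0, is a sequence in ℝ₊ × ℝ with M⁻¹ < r_i < M for all i, arising as renormalizations of a non-intersecting configuration: specifically, suppose there is a point x ∈ ℝ² not on the line ℓ = {(u,v) : v = u + t₀}, nested rectangles R_i ⊇ R_{i+1} with x = ⋂ R_i and diam(R_i) → 0, such that R_i ∩ ℓ = ∅ for all large i, and t_i equals the y-intercept of ℓ after rescaling by the reciprocal of the width of R_i. Then |t_i| → ∞. -/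
open Set Filter

/-- if the renormalized offsets come from a point off the line,
the offsets blow up. Here `R i = [a i, b i] × [c i, d i]` are nested rectangles
shrinking to a point `x` off the line `ℓ = {v = u + t₀}`, with aspect ratios
`(d i - c i)/(b i - a i)` in `(M⁻¹, M)` and `R i ∩ ℓ = ∅` eventually; the
rescaled y-intercept is `t_i = (t₀ + a i - c i)/(b i - a i)`, and `|t_i| → ∞`. -/
theorem stmt_14 (M t₀ : ℝ) (hM : 1 < M) (a b c d : ℕ → ℝ)
    (hab : ∀ i, a i < b i) (hcd : ∀ i, c i < d i)
    (hnest : ∀ i, (Set.Icc (a (i + 1)) (b (i + 1)) ×ˢ Set.Icc (c (i + 1)) (d (i + 1))) ⊆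
      (Set.Icc (a i) (b i) ×ˢ Set.Icc (c i) (d i)))
    (x : ℝ × ℝ) (hx : ∀ i, x ∈ Set.Icc (a i) (b i) ×ˢ Set.Icc (c i) (d i))
    (hdiam₁ : Tendsto (fun i => b i - a i) atTop (nhds 0))
    (hdiam₂ : Tendsto (fun i => d i - c i) atTop (nhds 0))
    (hr : ∀ i, (d i - c i) / (b i - a i) ∈ Set.Ioo M⁻¹ M)
    (hoff : x.2 ≠ x.1 + t₀)
    (hsep : ∀ᶠ i in atTop,
      (Set.Icc (a i) (b i) ×ˢ Set.Icc (c i) (d i)) ∩ {p : ℝ × ℝ | p.2 = p.1 + t₀} = ∅) :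
    Tendsto (fun i => |(t₀ + a i - c i) / (b i - a i)|) atTop atTop := by
  have hxa : ∀ i, a i ≤ x.1 ∧ x.1 ≤ b i := fun i => ⟨(hx i).1.1, (hx i).1.2⟩
  have hxc : ∀ i, c i ≤ x.2 ∧ x.2 ≤ d i := fun i => ⟨(hx i).2.1, (hx i).2.2⟩
  have ha : Tendsto a atTop (nhds x.1) := by
    have h1 : Tendsto (fun i => x.1 - (b i - a i)) atTop (nhds x.1) := by
      simpa using tendsto_const_nhds.sub hdiam₁
    refine tendsto_of_tendsto_of_tendsto_of_le_of_le h1 tendsto_const_nhds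
      (fun i => ?_) (fun i => (hxa i).1)
    have := (hxa i).2; linarith
  have hc : Tendsto c atTop (nhds x.2) := by
    have h1 : Tendsto (fun i => x.2 - (d i - c i)) atTop (nhds x.2) := by
      simpa using tendsto_const_nhds.sub hdiam₂
    refine tendsto_of_tendsto_of_tendsto_of_le_of_le h1 tendsto_const_nhds
      (fun i => ?_) (fun i => (hxc i).1)
    have := (hxc i).2; linarith
  have hnum : Tendsto (fun i => |t₀ + a i - c i|) atTop (nhds (|t₀ + x.1 - x.2|)) := by
    exact (((tendsto_const_nhds.add ha).sub hc).abs)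
  have hpos : 0 < |t₀ + x.1 - x.2| := by
    rw [abs_pos]; intro h; apply hoff; linarith
  have hden : Tendsto (fun i => (b i - a i)⁻¹) atTop atTop := by
    apply Filter.Tendsto.inv_tendsto_nhdsGT_zero
    refine tendsto_nhdsWithin_of_tendsto_nhds_of_eventually_within _ hdiam₁ ?_
    filter_upwards with i
    exact sub_pos.mpr (hab i)
  have hmain : Tendsto (fun i => |t₀ + a i - c i| * (b i - a i)⁻¹) atTop atTop :=
    Filter.Tendsto.pos_mul_atTop hpos hnum hden
  refine hmain.congr (fun i => ?_)
  have hba : 0 < b i - a i := sub_pos.mpr (hab i)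
  rw [abs_div, abs_of_pos hba, div_eq_mul_inv]
end
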